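/- Let A be a vertex of finite height in a monotonous quiver O and let O_A be the clade of A. Then every vertex B of O_A satisfies h(A) ≤ h(B) < ∞ and h_A(B) ≥ h(B) − h(A), where h denotes height in O and h_A denotes height in O_A. -/

import Mathlib

universe u
variable {V : Type u} [Quiver V]

/-- An evolution of length `m` with vertex sequence `A 0, A 1, ..., A m`:
for each `k < m` there is an edge from `A (k+1)` to `A k`
(the paper's evolution `A 0 ← A 1 ← ⋯ ← A m`). -/
def IsEvol (A : ℕ → V) (m : ℕ) : Prop := ∀ k < m, Nonempty (A (k + 1) ⟶ A k)

/-- `Anc X Y` : `X` is an ancestor of `Y`, i.e. there is an evolution from `X` to `Y`. -/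
def Anc (X Y : V) : Prop := ∃ (m : ℕ) (A : ℕ → V), IsEvol A m ∧ A 0 = X ∧ A m = Y

/-- `X` and `Y` are isotypic. -/
def Isotypic (X Y : V) : Prop := Anc X Y ∧ Anc Y X

/-- A vertex is primitive if every ancestor of it is isotypic to it. -/
def Primitive (X : V) : Prop := ∀ B : V, Anc B X → Anc X B

/-- A full evolution for `X` : an evolution from a primitive vertex to `X`. -/
def IsFullEvol (A : ℕ → V) (m : ℕ) (X : V) : Prop :=
  IsEvol A m ∧ Primitive (A 0) ∧ A m = X

/-- The height of a vertex: the least length of a full evolution for it (`⊤` if none). -/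
noncomputable def height (X : V) : ℕ∞ :=
  sInf {n : ℕ∞ | ∃ m : ℕ, n = (m : ℕ∞) ∧ ∃ A : ℕ → V, IsFullEvol A m X}

/-- `A` is a critical ancestor of `B`. -/
def CritAnc (A B : V) : Prop :=
  height A < ⊤ ∧ ∃ (m : ℕ) (E : ℕ → V), 0 < m ∧ IsEvol E m ∧ E 0 = A ∧ E m = B ∧
    height (E 1) = height A + 1

/-- A vertex is normal if any two of its critical ancestors of equal height are isotypic. -/
def NormalVtx (B : V) : Prop :=
  ∀ A A' : V, CritAnc A B → CritAnc A' B → height A = height A' → Isotypic A A'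

/-- The evolution `(A, m)` embeds in the evolution `(B, n)`. -/
def Embeds (A : ℕ → V) (m : ℕ) (B : ℕ → V) (n : ℕ) : Prop :=
  m ≤ n ∧ ∃ r : ℕ → ℕ, (∀ k < m, r k < r (k + 1)) ∧ r m ≤ n ∧
    ∀ k ≤ m, Isotypic (A k) (B (r k))

/-- A universal evolution for `X`: a full evolution for `X` embedding in every
full evolution for `X`. -/
def IsUniversalEvol (A : ℕ → V) (m : ℕ) (X : V) : Prop :=
  IsFullEvol A m X ∧ ∀ (B : ℕ → V) (n : ℕ), IsFullEvol B n X → Embeds A m B n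

/-- A vertex is phylogenetic if it admits a universal evolution. -/
def Phylogenetic (X : V) : Prop := ∃ (A : ℕ → V) (m : ℕ), IsUniversalEvol A m X

/-- A quiver is monotonous if `h(A) ≥ h(B)` for every edge `A → B`. -/
def Monotonous (V : Type u) [Quiver V] : Prop :=
  ∀ A B : V, Nonempty (A ⟶ B) → height B ≤ height A

/-- A vertex `A` is regular if for every descendant `B` of `A` with `h(B) = h(A)`
there is an edge `B → A`. -/
def Regular (A : V) : Prop :=
  ∀ B : V, Anc A B → height B = height A → Nonempty (B ⟶ A)

/-- The clade of a vertex `A`: the full subquiver of descendants of `A`. -/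
abbrev Clade (A : V) : Type u := {B : V // Anc A B}

instance (A : V) : Quiver (Clade A) := ⟨fun X Y => X.val ⟶ Y.val⟩

/-!
Along an evolution of length `n` the height grows by at most `n`, since a short full evolution
of the start can be prolonged by it; with monotonicity this gives `h(A) ≤ h(B) < ∞` for every
descendant `B` of `A`. A short full evolution of `B` inside the clade starts at a vertex `P` that
is primitive in the clade, and `A` is an ancestor of `P` there, so `P` is an ancestor of `A` and
`h(P) ≤ h(A)`. Read in the whole quiver, this evolution gives `h(B) ≤ h(P) + h_A(B)`.
-/

lemma IsEvol.of_le {E : ℕ → V} {m k : ℕ} (hE : IsEvol E m) (hk : k ≤ m) : IsEvol E k :=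
  fun j hj => hE j (hj.trans_le hk)

lemma Anc.refl (X : V) : Anc X X :=
  ⟨0, fun _ => X, fun _ hk => absurd hk (Nat.not_lt_zero _), rfl, rfl⟩

lemma IsEvol.append {P E : ℕ → V} {m n : ℕ} (hP : IsEvol P m) (hE : IsEvol E n)
    (hPE : P m = E 0) :
    IsEvol (fun k => if k < m then P k else E (k - m)) (m + n) := by
  intro k hk
  rcases lt_trichotomy (k + 1) m with hlt | heq | hgt
  · simpa only [if_pos hlt, if_pos (show k < m by omega)] using hP k (by omega)
  · subst heq
    simpa only [lt_irrefl, if_false, Nat.sub_self, ← hPE, if_pos k.lt_succ_self]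
      using hP k k.lt_succ_self
  · simp only [if_neg (show ¬k + 1 < m by omega), if_neg (show ¬k < m by omega),
      show k + 1 - m = k - m + 1 by omega]
    exact hE (k - m) (by omega)

lemma IsFullEvol.append {P E : ℕ → V} {m n : ℕ} (hP : IsFullEvol P m (E 0)) (hE : IsEvol E n) :
    IsFullEvol (fun k => if k < m then P k else E (k - m)) (m + n) (E n) := by
  obtain ⟨hPe, hPprim, hPm⟩ := hP
  refine ⟨hPe.append hE hPm, ?_, by simp⟩
  rcases Nat.eq_zero_or_pos m with rfl | hm
  · simpa [← hPm] using hPprim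
  · simpa [hm] using hPprim

lemma height_le_of_isFullEvol {X : V} {A : ℕ → V} {m : ℕ} (h : IsFullEvol A m X) :
    height X ≤ m :=
  sInf_le ⟨m, rfl, A, h⟩

lemma exists_isFullEvol_of_height_lt_top {X : V} (h : height X < ⊤) :
    ∃ m : ℕ, height X = m ∧ ∃ A : ℕ → V, IsFullEvol A m X := by
  have hne : {n : ℕ∞ | ∃ m : ℕ, n = m ∧ ∃ A : ℕ → V, IsFullEvol A m X}.Nonempty := by
    by_contra hempty
    rw [Set.not_nonempty_iff_eq_empty] at hempty
    simp [height, hempty] at h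
  exact csInf_mem hne

lemma height_le_add_of_isEvol {E : ℕ → V} {n : ℕ} (hE : IsEvol E n) :
    height (E n) ≤ height (E 0) + n := by
  obtain hE0 | hE0 := eq_or_lt_of_le (le_top : height (E 0) ≤ ⊤)
  · simp [hE0]
  obtain ⟨m, hm, P, hP⟩ := exists_isFullEvol_of_height_lt_top hE0
  rw [hm]
  exact_mod_cast height_le_of_isFullEvol (hP.append hE)

lemma height_le_of_anc (hmon : Monotonous V) {X Y : V} (h : Anc X Y) :
    height X ≤ height Y := by
  obtain ⟨m, E, hE, rfl, rfl⟩ := h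
  induction m with
  | zero => exact le_rfl
  | succ k ih => exact (ih (hE.of_le k.le_succ)).trans (hmon _ _ (hE k k.lt_succ_self))

lemma height_lt_top_of_anc {X Y : V} (hX : height X < ⊤) (h : Anc X Y) : height Y < ⊤ := by
  obtain ⟨n, E, hE, rfl, rfl⟩ := h
  exact (height_le_add_of_isEvol hE).trans_lt (ENat.add_lt_top.2 ⟨hX, ENat.natCast_lt_top n⟩)

namespace Clade

def root (A : V) : Clade A := ⟨A, Anc.refl A⟩

lemma isEvol_val {A : V} {C : ℕ → Clade A} {n : ℕ} (hC : IsEvol C n) :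
    IsEvol (fun k => (C k).val) n :=
  hC

lemma anc_val {A : V} {X Y : Clade A} (h : Anc X Y) : Anc X.val Y.val := by
  obtain ⟨m, C, hC, rfl, rfl⟩ := h
  exact ⟨m, fun k => (C k).val, isEvol_val hC, rfl, rfl⟩

lemma root_anc {A : V} (X : Clade A) : Anc (root A) X := by
  obtain ⟨m, E, hE, hE0, hEm⟩ := X.property
  refine ⟨m, fun k => ⟨E (min k m), min k m, E, hE.of_le (min_le_right k m), hE0, rfl⟩,
    fun k hk => ?_, Subtype.ext (by simp [hE0, root]), Subtype.ext (by simp [hEm])⟩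
  change Nonempty (E (min (k + 1) m) ⟶ E (min k m))
  rw [min_eq_left hk, min_eq_left hk.le]
  exact hE k hk

lemma anc_of_primitive {A : V} {X : Clade A} (hX : Primitive X) : Anc X.val A :=
  anc_val (hX _ (root_anc X))

end Clade

theorem stmt_17 (hmon : Monotonous V) (A : V) (hA : height A < ⊤) :
    ∀ B : Clade A, height A ≤ height B.val ∧ height B.val < ⊤ ∧
      height B.val - height A ≤ height B := by
  intro B
  refine ⟨height_le_of_anc hmon B.property, height_lt_top_of_anc hA B.property, ?_⟩
  rw [tsub_le_iff_right]
  obtain hB | hB := eq_or_lt_of_le (le_top : height B ≤ ⊤)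
  · simp [hB]
  obtain ⟨n, hn, C, hC, hprim, rfl⟩ := exists_isFullEvol_of_height_lt_top hB
  calc height (C n).val ≤ height (C 0).val + n := height_le_add_of_isEvol (Clade.isEvol_val hC)
    _ ≤ height A + n := by gcongr; exact height_le_of_anc hmon (Clade.anc_of_primitive hprim)
    _ = height (C n) + height A := by rw [hn, add_comm]
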